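/- arXiv:2503.13877 — 3 statements merged into one kernel-verified Lean document; each statement's English description precedes it below -/
import Mathlib

section
/- Let a, Δt, Δx be real numbers with Δx > 0 and Δt > 0, and set ν = a·Δt/Δx. Suppose |ν| ≤ 1 (the CFL condition). If u : ℤ → ℝ is such that the family ((u i)²)_{i ∈ ℤ} is summable, then for the Lax–Friedrichs update u' : ℤ → ℝ defined by u' i = (1/2)·(u (i-1) + u (i+1)) − (ν/2)·(u (i+1) − u (i-1)), the family ((u' i)²)_{i ∈ ℤ} is summable and ∑_{i ∈ ℤ} (u' i)² ≤ ∑_{i ∈ ℤ} (u i)² (L² stability). -/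
/-!
Writing `α = (1 + ν) / 2` and `β = (1 - ν) / 2`, the CFL condition says exactly that `α, β ≥ 0`,
so the Lax–Friedrichs update `u' i = α u (i - 1) + β u (i + 1)` is a convex combination of two
translates of `u`. Convexity of `x ↦ x²` bounds `(u' i)²` by `α u (i - 1)² + β u (i + 1)²`, and
translates have the same `ℓ²` mass, so summing gives `‖u'‖² ≤ (α + β) ‖u‖² = ‖u‖²`.
-/

section ConvexCombinationOfTranslates

variable {G : Type*} [AddGroup G]

lemma Summable.comp_add_right {M : Type*} [AddCommMonoid M] [TopologicalSpace M] {f : G → M}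
    (hf : Summable f) (g : G) : Summable fun i => f (i + g) :=
  (Equiv.addRight g).summable_iff (f := f) |>.2 hf

lemma tsum_comp_add_right {M : Type*} [AddCommMonoid M] [TopologicalSpace M] (f : G → M)
    (g : G) : ∑' i, f (i + g) = ∑' i, f i :=
  (Equiv.addRight g).tsum_eq f

variable {u : G → ℝ} {α β : ℝ}

lemma sq_convexComb_le (hα : 0 ≤ α) (hβ : 0 ≤ β) (hαβ : α + β = 1) (x y : ℝ) :
    (α * x + β * y) ^ 2 ≤ α * x ^ 2 + β * y ^ 2 :=
  (even_two.convexOn_pow (𝕜 := ℝ)).2 trivial trivial hα hβ hαβ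

theorem summable_sq_convexComb_translates_and_tsum_le
    (hu : Summable fun i => u i ^ 2) (hα : 0 ≤ α) (hβ : 0 ≤ β) (hαβ : α + β = 1) (g h : G) :
    (Summable fun i => (α * u (i + g) + β * u (i + h)) ^ 2) ∧
      ∑' i, (α * u (i + g) + β * u (i + h)) ^ 2 ≤ ∑' i, u i ^ 2 := by
  have hg := hu.comp_add_right g |>.mul_left α
  have hh := hu.comp_add_right h |>.mul_left β
  have hbound : Summable fun i => α * u (i + g) ^ 2 + β * u (i + h) ^ 2 := hg.add hh
  have hle : ∀ i, (α * u (i + g) + β * u (i + h)) ^ 2 ≤ α * u (i + g) ^ 2 + β * u (i + h) ^ 2 :=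
    fun i => sq_convexComb_le hα hβ hαβ _ _
  have hsum := hbound.of_nonneg_of_le (fun i => sq_nonneg _) hle
  refine ⟨hsum, ?_⟩
  calc ∑' i, (α * u (i + g) + β * u (i + h)) ^ 2
      ≤ ∑' i, (α * u (i + g) ^ 2 + β * u (i + h) ^ 2) := hsum.tsum_le_tsum hle hbound
    _ = (α + β) * ∑' i, u i ^ 2 := by
      rw [hg.tsum_add hh, tsum_mul_left, tsum_mul_left, tsum_comp_add_right (u · ^ 2),
        tsum_comp_add_right (u · ^ 2), add_mul]
    _ = ∑' i, u i ^ 2 := by rw [hαβ, one_mul]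

end ConvexCombinationOfTranslates

theorem laxFriedrichs_L2_stability_general
    (ν : ℝ) (hcfl : |ν| ≤ 1)
    (u : ℤ → ℝ) (hsum : Summable (fun i : ℤ => (u i)^2))
    (u' : ℤ → ℝ)
    (hupd : ∀ i : ℤ, u' i =
      (1/2) * (u (i-1) + u (i+1)) - (ν/2) * (u (i+1) - u (i-1))) :
    Summable (fun i : ℤ => (u' i)^2) ∧
      (∑' i : ℤ, (u' i)^2) ≤ (∑' i : ℤ, (u i)^2) := by
  obtain ⟨hν_ge, hν_le⟩ := abs_le.1 hcfl
  have hconvex : u' = fun i => (1 + ν) / 2 * u (i + -1) + (1 - ν) / 2 * u (i + 1) := by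
    funext i
    rw [hupd, ← sub_eq_add_neg]
    ring
  rw [hconvex]
  exact summable_sq_convexComb_translates_and_tsum_le hsum (by linarith) (by linarith) (by ring) _ _

/-- L² stability of the Lax–Friedrichs scheme for linear advection under the CFL condition. -/
theorem laxFriedrichs_L2_stability
    (a Δt Δx : ℝ) (hΔx : 0 < Δx) (hΔt : 0 < Δt)
    (ν : ℝ) (hν : ν = a * Δt / Δx) (hcfl : |ν| ≤ 1)
    (u : ℤ → ℝ) (hsum : Summable (fun i : ℤ => (u i)^2))
    (u' : ℤ → ℝ)
    (hupd : ∀ i : ℤ, u' i =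
      (1/2) * (u (i-1) + u (i+1)) - (ν/2) * (u (i+1) - u (i-1))) :
    Summable (fun i : ℤ => (u' i)^2) ∧
      (∑' i : ℤ, (u' i)^2) ≤ (∑' i : ℤ, (u i)^2) :=
  laxFriedrichs_L2_stability_general ν hcfl u hsum u' hupd
end

section
/- Let a, Δt, Δx be real numbers with Δx > 0 and Δt > 0, and set ν = a·Δt/Δx. Suppose |ν| ≤ 1 (the CFL condition). If u : ℤ → ℝ is such that the family (|u (i+1) − u i|)_{i ∈ ℤ} is summable, then for the Lax–Friedrichs update u' : ℤ → ℝ defined by u' i = (1/2)·(u (i-1) + u (i+1)) − (ν/2)·(u (i+1) − u (i-1)), the family (|u' (i+1) − u' i|)_{i ∈ ℤ} is summable and TV(u') = ∑_{i ∈ ℤ} |u' (i+1) − u' i| ≤ ∑_{i ∈ ℤ} |u (i+1) − u i| = TV(u) (the scheme is total variation diminishing). -/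
/-! Each increment of a Lax–Friedrichs step is the combination
`(1 + ν)/2 · Δu(i-1) + (1 - ν)/2 · Δu(i+1)` of two neighbouring increments of `u`; under the
CFL condition both weights are nonnegative and they add up to `1`. Summing the triangle
inequality over `ℤ`, the two shifted copies of `TV(u)` recombine to exactly `TV(u)`. -/

theorem HasSum.shift_average {α : Type*} [Semiring α] [TopologicalSpace α]
    [IsTopologicalSemiring α] {f : ℤ → α} {s : α} (hf : HasSum f s) (p q : α) :
    HasSum (fun i => p * f (i - 1) + q * f (i + 1)) ((p + q) * s) := by
  have hl : HasSum (fun i => f (i - 1)) s := (Equiv.subRight (1 : ℤ)).hasSum_iff.mpr hf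
  have hr : HasSum (fun i => f (i + 1)) s := (Equiv.addRight (1 : ℤ)).hasSum_iff.mpr hf
  simpa only [add_mul] using (hl.mul_left p).add (hr.mul_left q)

theorem laxFriedrichs_sub_eq {ν : ℝ} {u u' : ℤ → ℝ}
    (hupd : ∀ i : ℤ, u' i = (1/2) * (u (i-1) + u (i+1)) - (ν/2) * (u (i+1) - u (i-1)))
    (i : ℤ) :
    u' (i + 1) - u' i =
      (1 + ν) / 2 * (u (i - 1 + 1) - u (i - 1)) + (1 - ν) / 2 * (u (i + 1 + 1) - u (i + 1)) := by
  rw [hupd, hupd, add_sub_cancel_right, sub_add_cancel]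
  ring

theorem abs_laxFriedrichs_sub_le {ν : ℝ} (hcfl : |ν| ≤ 1) {u u' : ℤ → ℝ}
    (hupd : ∀ i : ℤ, u' i = (1/2) * (u (i-1) + u (i+1)) - (ν/2) * (u (i+1) - u (i-1)))
    (i : ℤ) :
    |u' (i + 1) - u' i| ≤
      (1 + ν) / 2 * |u (i - 1 + 1) - u (i - 1)| + (1 - ν) / 2 * |u (i + 1 + 1) - u (i + 1)| := by
  obtain ⟨hν₁, hν₂⟩ := abs_le.mp hcfl
  have hl : 0 ≤ (1 + ν) / 2 := by linarith
  have hr : 0 ≤ (1 - ν) / 2 := by linarith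
  calc |u' (i + 1) - u' i|
      ≤ |(1 + ν) / 2 * (u (i - 1 + 1) - u (i - 1))|
          + |(1 - ν) / 2 * (u (i + 1 + 1) - u (i + 1))| := by
        rw [laxFriedrichs_sub_eq hupd]
        exact abs_add_le _ _
    _ = _ := by rw [abs_mul, abs_mul, abs_of_nonneg hl, abs_of_nonneg hr]

theorem laxFriedrichs_TVD_general
    (ν : ℝ) (hcfl : |ν| ≤ 1)
    (u : ℤ → ℝ) (hsum : Summable (fun i : ℤ => |u (i+1) - u i|))
    (u' : ℤ → ℝ)
    (hupd : ∀ i : ℤ, u' i =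
      (1/2) * (u (i-1) + u (i+1)) - (ν/2) * (u (i+1) - u (i-1))) :
    Summable (fun i : ℤ => |u' (i+1) - u' i|) ∧
      (∑' i : ℤ, |u' (i+1) - u' i|) ≤ (∑' i : ℤ, |u (i+1) - u i|) := by
  have hbound := abs_laxFriedrichs_sub_le hcfl hupd
  have hmajorant := hsum.hasSum.shift_average ((1 + ν) / 2) ((1 - ν) / 2)
  rw [show (1 + ν) / 2 + (1 - ν) / 2 = 1 by ring, one_mul] at hmajorant
  have hsum' : Summable (fun i : ℤ => |u' (i+1) - u' i|) :=
    hmajorant.summable.of_nonneg_of_le (fun _ => abs_nonneg _) hbound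
  exact ⟨hsum', hasSum_le hbound hsum'.hasSum hmajorant⟩

/-- The Lax–Friedrichs scheme for linear advection is total variation diminishing
under the CFL condition. -/
theorem laxFriedrichs_TVD
    (a Δt Δx : ℝ) (hΔx : 0 < Δx) (hΔt : 0 < Δt)
    (ν : ℝ) (hν : ν = a * Δt / Δx) (hcfl : |ν| ≤ 1)
    (u : ℤ → ℝ) (hsum : Summable (fun i : ℤ => |u (i+1) - u i|))
    (u' : ℤ → ℝ)
    (hupd : ∀ i : ℤ, u' i =
      (1/2) * (u (i-1) + u (i+1)) - (ν/2) * (u (i+1) - u (i-1))) :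
    Summable (fun i : ℤ => |u' (i+1) - u' i|) ∧
      (∑' i : ℤ, |u' (i+1) - u' i|) ≤ (∑' i : ℤ, |u (i+1) - u i|) :=
  laxFriedrichs_TVD_general ν hcfl u hsum u' hupd
end

section
/- Let u_L, u_R, v_th be real numbers, and let A = !![0, 1; v_th² − (u_L² + u_R²)/2, u_L + u_R] be the arithmetic-average Roe matrix for the (ρ, ρu) components of the isothermal Euler equations expressed in terms of the left and right velocities u_L, u_R. Then A has a real eigenvalue (i.e. there exists λ ∈ ℝ with det(A − λ·1) = 0) if and only if (u_R − u_L)² ≤ 4·v_th²; in that case its eigenvalues are (u_L + u_R)/2 ± √(v_th² − (u_R − u_L)²/4). In particular, the Roe solver's hyperbolicity-preservation for the isothermal Euler system cannot be guaranteed unconditionally, but holds under the condition |u_R − u_L| ≤ 2·v_th. -/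
/-!
Completing the square, the characteristic polynomial of the Roe matrix is
`(λ - (u_L + u_R)/2)² - (v_th² - (u_R - u_L)²/4)`, so it has a real root exactly when the
constant `v_th² - (u_R - u_L)²/4` is nonnegative, and the roots are then the mean velocity
plus or minus its square root.
-/

open Matrix Real

theorem Matrix.det_fin_two_sub_smul_one {R : Type*} [CommRing R]
    (A : Matrix (Fin 2) (Fin 2) R) (lam : R) :
    det (A - lam • 1) = lam ^ 2 - A.trace * lam + A.det := by
  simp only [det_fin_two, trace_fin_two, sub_apply, smul_apply, one_apply_eq,
    one_apply_ne zero_ne_one, one_apply_ne one_ne_zero, smul_eq_mul, mul_one, mul_zero]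
  ring

theorem det_isothermalRoe_sub_smul_one (uL uR v_th lam : ℝ) :
    det ((!![0, 1; v_th ^ 2 - (uL ^ 2 + uR ^ 2) / 2, uL + uR] : Matrix (Fin 2) (Fin 2) ℝ) -
        lam • 1) =
      (lam - (uL + uR) / 2) ^ 2 - (v_th ^ 2 - (uR - uL) ^ 2 / 4) := by
  rw [det_fin_two_sub_smul_one, trace_fin_two_of, det_fin_two_of]
  ring

theorem Real.exists_sub_sq_eq_iff (m D : ℝ) : (∃ x, (x - m) ^ 2 = D) ↔ 0 ≤ D :=
  ⟨fun ⟨_, hx⟩ => hx ▸ sq_nonneg _, fun hD => ⟨m + √D, by rw [add_sub_cancel_left, sq_sqrt hD]⟩⟩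

/-- The arithmetic-average Roe matrix for the (ρ, ρu) components of the isothermal
Euler equations has a real eigenvalue iff (u_R − u_L)² ≤ 4·v_th²; in that case its
eigenvalues are (u_L + u_R)/2 ± √(v_th² − (u_R − u_L)²/4). -/
theorem isothermalEuler_roe_hyperbolicity (uL uR v_th : ℝ) :
    ((∃ lam : ℝ,
        det ((!![0, 1; v_th ^ 2 - (uL ^ 2 + uR ^ 2) / 2, uL + uR] :
            Matrix (Fin 2) (Fin 2) ℝ) - lam • 1) = 0) ↔
      (uR - uL) ^ 2 ≤ 4 * v_th ^ 2) ∧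
    ((uR - uL) ^ 2 ≤ 4 * v_th ^ 2 →
      det ((!![0, 1; v_th ^ 2 - (uL ^ 2 + uR ^ 2) / 2, uL + uR] :
          Matrix (Fin 2) (Fin 2) ℝ) -
        ((uL + uR) / 2 + Real.sqrt (v_th ^ 2 - (uR - uL) ^ 2 / 4)) • 1) = 0 ∧
      det ((!![0, 1; v_th ^ 2 - (uL ^ 2 + uR ^ 2) / 2, uL + uR] :
          Matrix (Fin 2) (Fin 2) ℝ) -
        ((uL + uR) / 2 - Real.sqrt (v_th ^ 2 - (uR - uL) ^ 2 / 4)) • 1) = 0) := by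
  have hdiscr : (uR - uL) ^ 2 ≤ 4 * v_th ^ 2 ↔ 0 ≤ v_th ^ 2 - (uR - uL) ^ 2 / 4 := by
    constructor <;> intro <;> linarith
  simp only [det_isothermalRoe_sub_smul_one, sub_eq_zero, hdiscr]
  refine ⟨exists_sub_sq_eq_iff _ _, fun hD => ⟨?_, ?_⟩⟩
  · rw [add_sub_cancel_left, sq_sqrt hD]
  · rw [sub_sub_cancel_left, neg_sq, sq_sqrt hD]
end
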